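/- arXiv:1804.00158 — 6 statements merged into one kernel-verified Lean document; each statement's English description precedes it below -/
import Mathlib

section
/- For every non-negative integer k, the tree T(k) obtained by subdividing k edges of a star of order k+2 once has independence number k+1 and has exactly 2^k + 1 maximum independent sets. -/
/-- `S` is an independent set of `G`: pairwise non-adjacent vertices. -/
def IndepSetOf {V : Type*} (G : SimpleGraph V) (S : Set V) : Prop :=
  S.Pairwise fun a b => ¬ G.Adj a b

/-- The independence number of `G`: the maximum cardinality of an independent set. -/
noncomputable def indepN {V : Type*} (G : SimpleGraph V) : ℕ :=
  sSup {n | ∃ S : Set V, IndepSetOf G S ∧ S.ncard = n}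

/-- `S` is a maximum independent set of `G`. -/
def MaxIndepSet {V : Type*} (G : SimpleGraph V) (S : Set V) : Prop :=
  IndepSetOf G S ∧ S.ncard = indepN G

/-- The number of maximum independent sets of `G`. -/
noncomputable def numMaxIndepSets {V : Type*} (G : SimpleGraph V) : ℕ :=
  {S : Set V | MaxIndepSet G S}.ncard

/-- `TkGraph k` is the tree `T(k)` obtained from a star with center `c` of order `k+2`
(center plus `k+1` leaves) by subdividing `k` of its edges once.
Vertices: the center `Sum.inl ()`, one pendant leaf `Sum.inr (Sum.inl ())`,
the subdivision vertices `v i = Sum.inr (Sum.inr (Sum.inl i))`, and the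
endvertices `u i = Sum.inr (Sum.inr (Sum.inr i))`. -/
def TkGraph (k : ℕ) : SimpleGraph (Unit ⊕ Unit ⊕ Fin k ⊕ Fin k) :=
  SimpleGraph.fromRel fun a b =>
    (a = Sum.inl () ∧ b = Sum.inr (Sum.inl ())) ∨
    (∃ i : Fin k, a = Sum.inl () ∧ b = Sum.inr (Sum.inr (Sum.inl i))) ∨
    (∃ i : Fin k, a = Sum.inr (Sum.inr (Sum.inl i)) ∧ b = Sum.inr (Sum.inr (Sum.inr i)))

/-!
The `k + 1` edges `c l` (with `l` the unsubdivided leaf) and `v i u i` form a perfect matching of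
`T(k)`, and an independent set contains at most one end of each, so `α(T(k)) ≤ k + 1`, with
equality for `{c} ∪ {u i}`. A maximum independent set containing `c` avoids every `v i`, hence is
`{c} ∪ {u i}`; one avoiding `c` lies in `{l} ∪ {w i}` for a choice of `w i ∈ {v i, u i}`, and each
of these `2 ^ k` sets is itself independent of size `k + 1`.
-/

section IndepSet

variable {V : Type*} {G : SimpleGraph V}

theorem indepN_le {n : ℕ} (h : ∀ S, IndepSetOf G S → S.ncard ≤ n) : indepN G ≤ n :=
  csSup_le ⟨0, ∅, Set.pairwise_empty _, Set.ncard_empty V⟩ <| by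
    rintro _ ⟨S, hS, rfl⟩
    exact h S hS

theorem IndepSetOf.ncard_le_indepN [Finite V] {S : Set V} (hS : IndepSetOf G S) :
    S.ncard ≤ indepN G :=
  le_csSup ⟨Nat.card V, by rintro _ ⟨T, -, rfl⟩; exact T.ncard_le_card⟩ ⟨S, hS, rfl⟩

theorem MaxIndepSet.eq_of_subset [Finite V] {S T : Set V} (hS : MaxIndepSet G S)
    (hT : IndepSetOf G T) (hST : S ⊆ T) : S = T :=
  Set.eq_of_subset_of_ncard_le hST (hS.2 ▸ hT.ncard_le_indepN)

theorem IndepSetOf.ncard_le_natCard {ι : Type*} [Finite ι] {S : Set V} (hS : IndepSetOf G S)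
    (f : V → ι) (hf : ∀ x y, x ≠ y → f x = f y → G.Adj x y) : S.ncard ≤ Nat.card ι := by
  have hinj : Set.InjOn f S := fun x hx y hy hxy =>
    by_contra fun hne => hS hx hy hne (hf x y hne hxy)
  rw [← hinj.ncard_image]
  exact Set.ncard_le_card _

end IndepSet

namespace TkGraph

abbrev Vertex (k : ℕ) : Type := Unit ⊕ Unit ⊕ Fin k ⊕ Fin k

variable {k : ℕ}

abbrev center : Vertex k := Sum.inl ()
abbrev leaf : Vertex k := Sum.inr (Sum.inl ())
abbrev mid (i : Fin k) : Vertex k := Sum.inr (Sum.inr (Sum.inl i))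
abbrev tip (i : Fin k) : Vertex k := Sum.inr (Sum.inr (Sum.inr i))

theorem adj_center_leaf : (TkGraph k).Adj center leaf := by
  simp [TkGraph, SimpleGraph.fromRel_adj]

theorem adj_center_mid (i : Fin k) : (TkGraph k).Adj center (mid i) := by
  simp [TkGraph, SimpleGraph.fromRel_adj]

theorem adj_mid_tip (i : Fin k) : (TkGraph k).Adj (mid i) (tip i) := by
  simp [TkGraph, SimpleGraph.fromRel_adj]

def matchingIndex : Vertex k → Option (Fin k)
  | Sum.inl _ | Sum.inr (Sum.inl _) => none
  | Sum.inr (Sum.inr (Sum.inl i)) | Sum.inr (Sum.inr (Sum.inr i)) => some i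

theorem adj_of_matchingIndex_eq (x y : Vertex k) (hne : x ≠ y)
    (h : matchingIndex x = matchingIndex y) : (TkGraph k).Adj x y := by
  rcases x with _ | _ | i | i <;> rcases y with _ | _ | j | j <;>
    simp_all [matchingIndex, TkGraph, SimpleGraph.fromRel_adj]

def centerSet : Set (Vertex k) := insert center (Set.range tip)

def pick (f : Fin k → Bool) (i : Fin k) : Vertex k :=
  if f i then mid i else tip i

def leafSet (f : Fin k → Bool) : Set (Vertex k) :=
  insert leaf (Set.range (pick f))

theorem indepSetOf_centerSet : IndepSetOf (TkGraph k) centerSet := by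
  rintro _ (rfl | ⟨i, rfl⟩) _ (rfl | ⟨j, rfl⟩) hne <;>
    simp_all [TkGraph, SimpleGraph.fromRel_adj]

theorem indepSetOf_leafSet (f : Fin k → Bool) : IndepSetOf (TkGraph k) (leafSet f) := by
  rintro _ (rfl | ⟨i, rfl⟩) _ (rfl | ⟨j, rfl⟩) hne
  · exact absurd rfl hne
  · unfold pick
    split_ifs <;> simp [TkGraph, SimpleGraph.fromRel_adj]
  · unfold pick
    split_ifs <;> simp [TkGraph, SimpleGraph.fromRel_adj]
  · have hij : i ≠ j := fun h => hne (h ▸ rfl)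
    unfold pick
    split_ifs <;> simp [TkGraph, SimpleGraph.fromRel_adj, hij, hij.symm]

theorem pick_injective (f : Fin k → Bool) : Function.Injective (pick f) := by
  intro i j h
  unfold pick at h
  split_ifs at h <;> simp_all

theorem pick_eq_mid_iff (f : Fin k → Bool) (i j : Fin k) : pick f j = mid i ↔ j = i ∧ f i := by
  unfold pick
  split_ifs <;> aesop

theorem ncard_centerSet : (centerSet (k := k)).ncard = k + 1 := by
  rw [centerSet, Set.ncard_insert_of_notMem (by simp),
    Set.ncard_range_of_injective (by intro i j; simp)]
  simp

theorem ncard_leafSet (f : Fin k → Bool) : (leafSet f).ncard = k + 1 := by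
  have hleaf : leaf ∉ Set.range (pick f) := by
    rintro ⟨i, h⟩
    unfold pick at h
    split_ifs at h <;> simp at h
  rw [leafSet, Set.ncard_insert_of_notMem hleaf, Set.ncard_range_of_injective (pick_injective f)]
  simp

theorem mid_mem_leafSet_iff (f : Fin k → Bool) (i : Fin k) : mid i ∈ leafSet f ↔ f i := by
  simp [leafSet, pick_eq_mid_iff]

theorem subset_centerSet {S : Set (Vertex k)} (hS : IndepSetOf (TkGraph k) S)
    (hc : center ∈ S) : S ⊆ centerSet := by
  rintro (⟨⟩ | ⟨⟩ | i | i) hx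
  · exact Set.mem_insert _ _
  · exact absurd adj_center_leaf (hS hc hx (by simp))
  · exact absurd (adj_center_mid i) (hS hc hx (by simp))
  · exact Set.mem_insert_of_mem _ ⟨i, rfl⟩

open Classical in
theorem subset_leafSet {S : Set (Vertex k)} (hS : IndepSetOf (TkGraph k) S)
    (hc : center ∉ S) : S ⊆ leafSet fun i => decide (mid i ∈ S) := by
  rintro (⟨⟩ | ⟨⟩ | i | i) hx
  · exact absurd hx hc
  · exact Set.mem_insert _ _
  · exact (mid_mem_leafSet_iff _ i).2 (decide_eq_true hx)
  · have hmid : mid i ∉ S := fun hm => hS hm hx (by simp) (adj_mid_tip i)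
    exact Set.mem_insert_of_mem _ ⟨i, by simp [pick, hmid]⟩

theorem indepN_eq : indepN (TkGraph k) = k + 1 := by
  refine le_antisymm (indepN_le fun S hS => ?_)
    (ncard_centerSet ▸ indepSetOf_centerSet.ncard_le_indepN)
  simpa using hS.ncard_le_natCard matchingIndex adj_of_matchingIndex_eq

theorem setOf_maxIndepSet :
    {S | MaxIndepSet (TkGraph k) S} = insert centerSet (Set.range leafSet) := by
  ext S
  constructor
  · intro hS
    by_cases hc : center ∈ S
    · exact Or.inl (hS.eq_of_subset indepSetOf_centerSet (subset_centerSet hS.1 hc))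
    · exact Or.inr ⟨_, (hS.eq_of_subset (indepSetOf_leafSet _) (subset_leafSet hS.1 hc)).symm⟩
  · rintro (rfl | ⟨f, rfl⟩)
    · exact ⟨indepSetOf_centerSet, by rw [ncard_centerSet, indepN_eq]⟩
    · exact ⟨indepSetOf_leafSet f, by rw [ncard_leafSet, indepN_eq]⟩

theorem leafSet_injective : Function.Injective (leafSet (k := k)) := fun f g h =>
  funext fun i => Bool.eq_iff_iff.2 <| by rw [← mid_mem_leafSet_iff, ← mid_mem_leafSet_iff, h]

theorem center_notMem_leafSet (f : Fin k → Bool) : center ∉ leafSet f := by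
  rintro (h | ⟨i, h⟩)
  · simp at h
  · unfold pick at h
    split_ifs at h

theorem centerSet_notMem_range_leafSet : centerSet ∉ Set.range (leafSet (k := k)) := by
  rintro ⟨f, hf⟩
  exact center_notMem_leafSet f (hf ▸ Set.mem_insert _ _)

end TkGraph

/-- `T(k)` has independence number `k+1` and exactly `2^k + 1`
maximum independent sets. -/
theorem TkGraph_indepN_and_numMaxIndepSets (k : ℕ) :
    indepN (TkGraph k) = k + 1 ∧ numMaxIndepSets (TkGraph k) = 2 ^ k + 1 := by
  refine ⟨TkGraph.indepN_eq, ?_⟩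
  rw [numMaxIndepSets, TkGraph.setOf_maxIndepSet,
    Set.ncard_insert_of_notMem TkGraph.centerSet_notMem_range_leafSet,
    Set.ncard_range_of_injective TkGraph.leafSet_injective]
  simp
end

section
/- The spider tree T* obtained from a single center vertex by attaching two paths of length 2 and one path of length 4 (a tree on 9 vertices) has domination number 4 and has exactly 18 minimum dominating sets; in particular, there exists a tree with domination number γ having more than 2^γ minimum dominating sets. -/
/-!
The closed neighbourhoods of the vertices `2`, `4`, `8` and `5` of `T*` are pairwise disjoint, so a
dominating set needs a separate vertex in each of them; `{1, 3, 5, 7}` shows that four vertices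
suffice. A minimum dominating set thus picks one vertex from each of these four neighbourhoods, and
18 of the resulting `2 * 2 * 2 * 3` choices dominate, more than `2 ^ 4`.
-/

/-- `D` is a dominating set of `G`: every vertex outside `D` has a neighbor in `D`. -/
def Dominates {V : Type*} (G : SimpleGraph V) (D : Set V) : Prop :=
  ∀ v ∉ D, ∃ u ∈ D, G.Adj u v

/-- The domination number of `G`: the minimum cardinality of a dominating set. -/
noncomputable def domN {V : Type*} (G : SimpleGraph V) : ℕ :=
  sInf {n | ∃ D : Set V, Dominates G D ∧ D.ncard = n}

/-- `D` is a minimum dominating set of `G`. -/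
def MinDomSet {V : Type*} (G : SimpleGraph V) (D : Set V) : Prop :=
  Dominates G D ∧ D.ncard = domN G

/-- The number of minimum dominating sets of `G`. -/
noncomputable def numMinDomSets {V : Type*} (G : SimpleGraph V) : ℕ :=
  {D : Set V | MinDomSet G D}.ncard

/-- An endvertex: a vertex of degree at most 1. -/
def IsEndvtx {V : Type*} (G : SimpleGraph V) (v : V) : Prop :=
  (G.neighborSet v).ncard ≤ 1

/-- A strong support vertex: a vertex adjacent to at least two endvertices. -/
def IsStrongSupportVtx {V : Type*} (G : SimpleGraph V) (v : V) : Prop :=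
  ∃ a b : V, a ≠ b ∧ G.Adj v a ∧ G.Adj v b ∧ IsEndvtx G a ∧ IsEndvtx G b

/-- The spider tree `T*` on 9 vertices: center `0`, two paths of length 2
(`0-1-2` and `0-3-4`) and one path of length 4 (`0-5-6-7-8`). -/
def TStar : SimpleGraph (Fin 9) :=
  SimpleGraph.fromRel fun a b =>
    (a = 0 ∧ b = 1) ∨ (a = 1 ∧ b = 2) ∨ (a = 0 ∧ b = 3) ∨ (a = 3 ∧ b = 4) ∨
    (a = 0 ∧ b = 5) ∨ (a = 5 ∧ b = 6) ∨ (a = 6 ∧ b = 7) ∨ (a = 7 ∧ b = 8)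

namespace SimpleGraph

variable {V : Type*} (G : SimpleGraph V)

def closedNeighborSet (v : V) : Set V := insert v (G.neighborSet v)

def IsPacking (P : Set V) : Prop := P.PairwiseDisjoint G.closedNeighborSet

end SimpleGraph

open SimpleGraph

section Domination

variable {V : Type*} {G : SimpleGraph V}

theorem dominates_univ : Dominates G Set.univ := fun _ hv => absurd (Set.mem_univ _) hv

theorem Dominates.inter_closedNeighborSet_nonempty {D : Set V} (hD : Dominates G D) (v : V) :
    (G.closedNeighborSet v ∩ D).Nonempty := by
  by_cases hv : v ∈ D
  · exact ⟨v, Set.mem_insert v _, hv⟩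
  · obtain ⟨u, hu, huv⟩ := hD v hv
    exact ⟨u, Set.mem_insert_of_mem v huv.symm, hu⟩

theorem domN_le_ncard {D : Set V} (hD : Dominates G D) : domN G ≤ D.ncard :=
  Nat.sInf_le ⟨D, hD, rfl⟩

theorem le_domN {n : ℕ} (h : ∀ D, Dominates G D → n ≤ D.ncard) : n ≤ domN G :=
  le_csInf ⟨_, Set.univ, dominates_univ, rfl⟩ fun _ ⟨D, hD, hn⟩ => hn ▸ h D hD

theorem SimpleGraph.IsPacking.ncard_le_of_dominates [Finite V] {P D : Set V}
    (hP : G.IsPacking P) (hD : Dominates G D) : P.ncard ≤ D.ncard := by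
  choose f hf using hD.inter_closedNeighborSet_nonempty
  refine Set.ncard_le_ncard_of_injOn f (fun p _ => (hf p).2) fun p hp q hq hpq => ?_
  exact hP.elim_set hp hq (f p) (hf p).1 (hpq ▸ (hf q).1)

variable [Fintype V] [DecidableEq V] [DecidableRel G.Adj]

instance Dominates.decidableFinset (s : Finset V) : Decidable (Dominates G ↑s) :=
  decidable_of_iff (∀ v ∉ s, ∃ u ∈ s, G.Adj u v) (by simp only [Dominates, Finset.mem_coe])

open Finset in
theorem numMinDomSets_eq_card_filter :
    numMinDomSets G = #{s : Finset V | Dominates G ↑s ∧ s.card = domN G} := by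
  have hcoe : {D : Set V | MinDomSet G D} =
      (↑) '' {s : Finset V | Dominates G ↑s ∧ s.card = domN G} := by
    ext D
    refine ⟨fun hD => ⟨D.toFinite.toFinset, ?_, D.toFinite.coe_toFinset⟩, ?_⟩
    · simpa [MinDomSet, Set.ncard_eq_toFinset_card D] using hD
    · rintro ⟨s, hs, rfl⟩
      simpa [MinDomSet] using hs
  rw [numMinDomSets, hcoe, Set.ncard_image_of_injective _ Finset.coe_injective,
    Set.ncard_eq_toFinset_card', Set.toFinset_ofPred]

end Domination

instance : DecidableRel TStar.Adj := fun a b =>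
  decidable_of_iff _ (SimpleGraph.fromRel_adj _ a b).symm

theorem isPacking_TStar : TStar.IsPacking {2, 4, 8, 5} := by
  simp only [IsPacking, Set.PairwiseDisjoint, Set.Pairwise, Function.onFun, Set.disjoint_left,
    closedNeighborSet]
  decide

theorem domN_TStar : domN TStar = 4 := by
  refine le_antisymm ?_ (le_domN fun D hD => ?_)
  · simpa using domN_le_ncard (G := TStar) (D := ↑({1, 3, 5, 7} : Finset (Fin 9))) (by decide)
  · simpa using isPacking_TStar.ncard_le_of_dominates hD

theorem numMinDomSets_TStar : numMinDomSets TStar = 18 := by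
  rw [numMinDomSets_eq_card_filter, domN_TStar]
  decide

theorem isTree_TStar : TStar.IsTree := by
  rw [isTree_iff_connected_and_card, Nat.card_eq_fintype_card, ← edgeFinset_card,
    Nat.card_eq_fintype_card]
  exact ⟨(connected_iff _).2 ⟨by decide, ⟨0⟩⟩, by decide⟩

/-- the spider `T*` has domination number 4 and exactly 18 minimum
dominating sets; in particular there exists a tree with domination number γ
having more than 2^γ minimum dominating sets. -/
theorem TStar_domN_numMinDomSets :
    domN TStar = 4 ∧ numMinDomSets TStar = 18 ∧
      ∃ (n : ℕ) (G : SimpleGraph (Fin n)), G.IsTree ∧ 2 ^ domN G < numMinDomSets G := by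
  refine ⟨domN_TStar, numMinDomSets_TStar, 9, TStar, isTree_TStar, ?_⟩
  rw [domN_TStar, numMinDomSets_TStar]
  norm_num
end

section
/- Let γ and k be positive integers with k < γ, and let p_1, …, p_k be positive integers with p_1 + ⋯ + p_k = γ − 1. Then the tree T(p_1,…,p_k) has domination number γ. -/
/-- The tree `T(p 0, …, p (k-1))`: a root `x = Sum.inl ()`, vertices
`w i = Sum.inr (Sum.inl i)` adjacent to `x`, vertices
`v i j = Sum.inr (Sum.inr (Sum.inl ⟨i, j⟩))` adjacent to `w i`, and endvertices
`u i j = Sum.inr (Sum.inr (Sum.inr ⟨i, j⟩))` adjacent to `v i j`. -/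
def TreeT {k : ℕ} (p : Fin k → ℕ) :
    SimpleGraph (Unit ⊕ Fin k ⊕ (Σ i : Fin k, Fin (p i)) ⊕ (Σ i : Fin k, Fin (p i))) :=
  SimpleGraph.fromRel fun a b =>
    (∃ i : Fin k, a = Sum.inl () ∧ b = Sum.inr (Sum.inl i)) ∨
    (∃ (i : Fin k) (j : Fin (p i)),
      a = Sum.inr (Sum.inl i) ∧ b = Sum.inr (Sum.inr (Sum.inl ⟨i, j⟩))) ∨
    (∃ (i : Fin k) (j : Fin (p i)),
      a = Sum.inr (Sum.inr (Sum.inl ⟨i, j⟩)) ∧ b = Sum.inr (Sum.inr (Sum.inr ⟨i, j⟩)))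

lemma adj_u {k : ℕ} (p : Fin k → ℕ) (y) (s : Σ i : Fin k, Fin (p i)) :
    (TreeT p).Adj y (Sum.inr (Sum.inr (Sum.inr s))) ↔ y = Sum.inr (Sum.inr (Sum.inl s)) := by
  obtain ⟨i, j⟩ := s
  simp [TreeT, SimpleGraph.fromRel_adj]
  aesop

lemma adj_x {k : ℕ} (p : Fin k → ℕ) (y) :
    (TreeT p).Adj y (Sum.inl ()) ↔ ∃ i, y = Sum.inr (Sum.inl i) := by
  simp [TreeT, SimpleGraph.fromRel_adj]
  aesop

lemma adj_xw {k : ℕ} (p : Fin k → ℕ) (i : Fin k) :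
    (TreeT p).Adj (Sum.inl ()) (Sum.inr (Sum.inl i)) := by
  simp [TreeT, SimpleGraph.fromRel_adj]

lemma adj_vu {k : ℕ} (p : Fin k → ℕ) (s : Σ i : Fin k, Fin (p i)) :
    (TreeT p).Adj (Sum.inr (Sum.inr (Sum.inl s))) (Sum.inr (Sum.inr (Sum.inr s))) := by
  obtain ⟨i, j⟩ := s
  simp [TreeT, SimpleGraph.fromRel_adj]

/-- for positive integers `k < γ` and positive `p i` summing to
`γ - 1`, the tree `T(p 0, …, p (k-1))` has domination number `γ`. -/
theorem TreeT_domN (γ k : ℕ) (hk : 0 < k) (hkγ : k < γ) (p : Fin k → ℕ)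
    (hp : ∀ i, 0 < p i) (hsum : ∑ i, p i = γ - 1) :
    domN (TreeT p) = γ := by
  classical
  have hγ1 : 1 ≤ γ := by omega
  let vv : (Σ i : Fin k, Fin (p i)) →
      Unit ⊕ Fin k ⊕ (Σ i : Fin k, Fin (p i)) ⊕ (Σ i : Fin k, Fin (p i)) :=
    fun s => Sum.inr (Sum.inr (Sum.inl s))
  have vvinj : Function.Injective vv := by
    intro a b h
    simpa [vv] using h
  have hcard : Nat.card (Σ i : Fin k, Fin (p i)) = γ - 1 := by
    simp [Nat.card_eq_fintype_card, Fintype.card_sigma, hsum]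
  have hdom0 : Dominates (TreeT p) (insert (Sum.inl ()) (Set.range vv)) := by
    rintro (⟨⟩ | i | s | s) hv
    · exact absurd (Set.mem_insert _ _) hv
    · exact ⟨Sum.inl (), Set.mem_insert _ _, adj_xw p i⟩
    · exact absurd (Set.mem_insert_of_mem _ (Set.mem_range_self s)) hv
    · exact ⟨vv s, Set.mem_insert_of_mem _ (Set.mem_range_self s), adj_vu p s⟩
  have hcard0 : (insert (Sum.inl ()) (Set.range vv)).ncard = γ := by
    rw [Set.ncard_insert_of_notMem (by rintro ⟨s, h⟩; simp [vv] at h)]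
    rw [← Set.image_univ, Set.ncard_image_of_injective _ vvinj, Set.ncard_univ, hcard]
    omega
  have hmem : γ ∈ {n | ∃ D, Dominates (TreeT p) D ∧ D.ncard = n} :=
    ⟨_, hdom0, hcard0⟩
  refine le_antisymm (Nat.sInf_le hmem) (le_csInf ⟨γ, hmem⟩ ?_)
  rintro n ⟨D, hdom, rfl⟩
  let f : (Σ i : Fin k, Fin (p i)) →
      Unit ⊕ Fin k ⊕ (Σ i : Fin k, Fin (p i)) ⊕ (Σ i : Fin k, Fin (p i)) :=
    fun s =>
      if Sum.inr (Sum.inr (Sum.inr s)) ∈ D then Sum.inr (Sum.inr (Sum.inr s)) else vv s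
  have hfD : ∀ s, f s ∈ D := by
    intro s
    by_cases h : Sum.inr (Sum.inr (Sum.inr s)) ∈ D
    · simpa [f, h] using h
    · obtain ⟨y, hy, hadj⟩ := hdom _ h
      rw [(adj_u p y s).1 hadj] at hy
      simpa [f, h, vv] using hy
  have hfinj : Function.Injective f := by
    intro a b h
    by_cases ha : Sum.inr (Sum.inr (Sum.inr a)) ∈ D <;>
      by_cases hb : Sum.inr (Sum.inr (Sum.inr b)) ∈ D <;>
      simp only [f, vv, ha, hb, if_true, if_false, if_pos, if_neg, not_false_iff] at h <;>
      simp_all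
  obtain ⟨y0, hy0D, hy0⟩ :
      ∃ y0 ∈ D, y0 = Sum.inl () ∨ ∃ i, y0 = Sum.inr (Sum.inl i) := by
    by_cases hx : (Sum.inl () : Unit ⊕ Fin k ⊕ (Σ i : Fin k, Fin (p i)) ⊕
        (Σ i : Fin k, Fin (p i))) ∈ D
    · exact ⟨_, hx, Or.inl rfl⟩
    · obtain ⟨y, hy, hadj⟩ := hdom _ hx
      exact ⟨y, hy, Or.inr ((adj_x p y).1 hadj)⟩
  have hy0f : y0 ∉ Set.range f := by
    rintro ⟨s, hs⟩
    by_cases h : Sum.inr (Sum.inr (Sum.inr s)) ∈ D <;>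
      simp only [f, vv, h, if_true, if_false] at hs <;>
      rcases hy0 with h' | ⟨i, h'⟩ <;> subst h' <;> simp_all
  have hsub : insert y0 (Set.range f) ⊆ D := by
    rintro z (rfl | ⟨s, rfl⟩)
    · exact hy0D
    · exact hfD s
  have hle : (insert y0 (Set.range f)).ncard ≤ D.ncard :=
    Set.ncard_le_ncard hsub (Set.toFinite D)
  rw [Set.ncard_insert_of_notMem hy0f, ← Set.image_univ,
    Set.ncard_image_of_injective _ hfinj, Set.ncard_univ, hcard] at hle
  omega
end

section
/- Let k be a positive integer and let p_1, …, p_k be positive integers. Then the number of minimum dominating sets of the tree T(p_1,…,p_k) equals 2^(p_1+⋯+p_k) + Σ_{i=1}^{k} 2^(p_i) · Π_{j≠i} (2^(p_j) − 1). -/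
namespace TreeTProof

variable {k : ℕ} (p : Fin k → ℕ)

abbrev Vt := Unit ⊕ Fin k ⊕ (Σ i : Fin k, Fin (p i)) ⊕ (Σ i : Fin k, Fin (p i))

def vx : Vt p := Sum.inl ()
def vw (i : Fin k) : Vt p := Sum.inr (Sum.inl i)
def vv (a : Σ i : Fin k, Fin (p i)) : Vt p := Sum.inr (Sum.inr (Sum.inl a))
def vu (a : Σ i : Fin k, Fin (p i)) : Vt p := Sum.inr (Sum.inr (Sum.inr a))

variable {p}

@[simp] lemma vx_ne_vw (i : Fin k) : vx p ≠ vw p i := by simp [vx, vw]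
@[simp] lemma vw_ne_vx (i : Fin k) : vw p i ≠ vx p := by simp [vx, vw]
@[simp] lemma vw_inj {i i' : Fin k} : vw p i = vw p i' ↔ i = i' := by simp [vw]
@[simp] lemma vv_inj {a b : Σ i : Fin k, Fin (p i)} : vv p a = vv p b ↔ a = b := by simp [vv]
@[simp] lemma vu_inj {a b : Σ i : Fin k, Fin (p i)} : vu p a = vu p b ↔ a = b := by simp [vu]
@[simp] lemma vv_ne_vu (a b : Σ i : Fin k, Fin (p i)) : vv p a ≠ vu p b := by simp [vv, vu]
@[simp] lemma vu_ne_vv (a b : Σ i : Fin k, Fin (p i)) : vu p a ≠ vv p b := by simp [vv, vu]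
@[simp] lemma vv_ne_vx (a : Σ i : Fin k, Fin (p i)) : vv p a ≠ vx p := by simp [vv, vx]
@[simp] lemma vu_ne_vx (a : Σ i : Fin k, Fin (p i)) : vu p a ≠ vx p := by simp [vu, vx]
@[simp] lemma vx_ne_vv (a : Σ i : Fin k, Fin (p i)) : vx p ≠ vv p a := by simp [vv, vx]
@[simp] lemma vx_ne_vu (a : Σ i : Fin k, Fin (p i)) : vx p ≠ vu p a := by simp [vu, vx]
@[simp] lemma vv_ne_vw (a : Σ i : Fin k, Fin (p i)) (i : Fin k) : vv p a ≠ vw p i := by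
  simp [vv, vw]
@[simp] lemma vu_ne_vw (a : Σ i : Fin k, Fin (p i)) (i : Fin k) : vu p a ≠ vw p i := by
  simp [vu, vw]
@[simp] lemma vw_ne_vv (a : Σ i : Fin k, Fin (p i)) (i : Fin k) : vw p i ≠ vv p a := by
  simp [vv, vw]
@[simp] lemma vw_ne_vu (a : Σ i : Fin k, Fin (p i)) (i : Fin k) : vw p i ≠ vu p a := by
  simp [vu, vw]

lemma adj_vx (z : Vt p) : (TreeT p).Adj z (vx p) ↔ ∃ i, z = vw p i := by
  rcases z with _ | z₁ <;> [skip; rcases z₁ with i' | z₂] <;> [skip; skip; rcases z₂ with a | a] <;>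
    simp [TreeT, SimpleGraph.fromRel_adj, vx, vw, vv, vu, Sigma.ext_iff]

lemma adj_vw (z : Vt p) (i : Fin k) :
    (TreeT p).Adj z (vw p i) ↔ z = vx p ∨ ∃ j, z = vv p ⟨i, j⟩ := by
  rcases z with _ | z₁ <;> [skip; rcases z₁ with i' | z₂] <;> [skip; skip; rcases z₂ with a | a] <;>
    simp [TreeT, SimpleGraph.fromRel_adj, vx, vw, vv, vu, Sigma.ext_iff]

lemma adj_vv (z : Vt p) (a : Σ i : Fin k, Fin (p i)) :
    (TreeT p).Adj z (vv p a) ↔ z = vw p a.1 ∨ z = vu p a := by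
  obtain ⟨i, j⟩ := a
  rcases z with _ | z₁ <;> [skip; rcases z₁ with i' | z₂] <;> [skip; skip; rcases z₂ with b | b] <;>
    simp [TreeT, SimpleGraph.fromRel_adj, vx, vw, vv, vu, Sigma.ext_iff]
  · constructor
    · rintro ⟨rfl, -⟩; rfl
    · rintro rfl; exact ⟨rfl, j, HEq.rfl⟩
  · constructor
    · rintro ⟨i₁, j₁, ⟨rfl, hj⟩, h3, h4⟩; exact ⟨h3, h4.trans hj.symm⟩
    · rintro ⟨h1, h2⟩; exact ⟨i, j, ⟨rfl, HEq.rfl⟩, h1, h2⟩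

lemma adj_vu (z : Vt p) (a : Σ i : Fin k, Fin (p i)) :
    (TreeT p).Adj z (vu p a) ↔ z = vv p a := by
  obtain ⟨i, j⟩ := a
  rcases z with _ | z₁ <;> [skip; rcases z₁ with i' | z₂] <;> [skip; skip; rcases z₂ with b | b] <;>
    simp [TreeT, SimpleGraph.fromRel_adj, vx, vw, vv, vu, Sigma.ext_iff]
  constructor
  · rintro ⟨i₁, j₁, ⟨h1, h2⟩, rfl, hj⟩; exact ⟨h1, h2.trans hj.symm⟩
  · rintro ⟨h1, h2⟩; exact ⟨i, j, ⟨h1, h2⟩, rfl, HEq.rfl⟩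

/-! ### The choice encoding -/

variable (p)

/-- The choice data indexing minimum dominating sets. -/
def ChoiceT :=
  (∀ i, Fin (p i) → Bool) ⊕
    (Σ i : Fin k, {f : ∀ i, Fin (p i) → Bool // ∀ j, j ≠ i → ∃ l, f j l = true})

variable {p}

def pick (f : ∀ i, Fin (p i) → Bool) (a : Σ i : Fin k, Fin (p i)) : Vt p :=
  if f a.1 a.2 then vv p a else vu p a

lemma pick_eq_or (f : ∀ i, Fin (p i) → Bool) (a) : pick f a = vv p a ∨ pick f a = vu p a := by
  unfold pick; split <;> simp

lemma pick_injective (f : ∀ i, Fin (p i) → Bool) : Function.Injective (pick f) := by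
  intro a b h
  rcases pick_eq_or f a with h1 | h1 <;> rcases pick_eq_or f b with h2 | h2 <;>
    rw [h1, h2] at h <;> simp_all

@[simp] lemma vx_not_mem_range_pick (f : ∀ i, Fin (p i) → Bool) :
    vx p ∉ Set.range (pick f) := by
  rintro ⟨a, ha⟩
  rcases pick_eq_or f a with h | h <;> rw [h] at ha <;> simp_all

@[simp] lemma vw_not_mem_range_pick (f : ∀ i, Fin (p i) → Bool) (i : Fin k) :
    vw p i ∉ Set.range (pick f) := by
  rintro ⟨a, ha⟩
  rcases pick_eq_or f a with h | h <;> rw [h] at ha <;> simp_all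

@[simp] lemma vv_mem_range_pick (f : ∀ i, Fin (p i) → Bool) (a) :
    vv p a ∈ Set.range (pick f) ↔ f a.1 a.2 = true := by
  constructor
  · rintro ⟨b, hb⟩
    unfold pick at hb
    split at hb
    · obtain rfl := vv_inj.1 hb; assumption
    · exact absurd hb (vu_ne_vv _ _)
  · intro hf; exact ⟨a, by simp [pick, hf]⟩

@[simp] lemma vu_mem_range_pick (f : ∀ i, Fin (p i) → Bool) (a) :
    vu p a ∈ Set.range (pick f) ↔ f a.1 a.2 = false := by
  constructor
  · rintro ⟨b, hb⟩
    unfold pick at hb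
    split at hb
    · exact absurd hb (vv_ne_vu _ _)
    · obtain rfl := vu_inj.1 hb; simp_all
  · intro hf; exact ⟨a, by simp [pick, hf]⟩

/-- The map from choice data to candidate dominating sets. -/
def Phi : ChoiceT p → Set (Vt p)
  | Sum.inl f => insert (vx p) (Set.range (pick f))
  | Sum.inr ⟨i, f, _⟩ => insert (vw p i) (Set.range (pick f))

lemma ncard_insert_range_pick (e : Vt p) (f : ∀ i, Fin (p i) → Bool)
    (he : e ∉ Set.range (pick f)) :
    (insert e (Set.range (pick f))).ncard = (∑ i, p i) + 1 := by
  rw [Set.ncard_insert_of_notMem he (Set.toFinite _)]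
  rw [← Set.image_univ, Set.ncard_image_of_injective _ (pick_injective f), Set.ncard_univ]
  simp [Nat.card_eq_fintype_card]

lemma ncard_Phi (t : ChoiceT p) : (Phi t).ncard = (∑ i, p i) + 1 := by
  rcases t with f | ⟨i, f, hf⟩
  · exact ncard_insert_range_pick _ _ (vx_not_mem_range_pick f)
  · exact ncard_insert_range_pick _ _ (vw_not_mem_range_pick f i)

lemma pick_mem_Phi (t : ChoiceT p) (a : Σ i : Fin k, Fin (p i)) :
    vv p a ∈ Phi t ∨ vu p a ∈ Phi t := by
  rcases t with f | ⟨i, f, hf⟩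
  · have hmem : pick f a ∈ insert (vx p) (Set.range (pick f)) :=
      Set.mem_insert_of_mem _ (Set.mem_range_self a)
    rcases pick_eq_or f a with h | h <;> rw [h] at hmem
    · exact Or.inl hmem
    · exact Or.inr hmem
  · have hmem : pick f a ∈ insert (vw p i) (Set.range (pick f)) :=
      Set.mem_insert_of_mem _ (Set.mem_range_self a)
    rcases pick_eq_or f a with h | h <;> rw [h] at hmem
    · exact Or.inl hmem
    · exact Or.inr hmem

lemma dominates_Phi (t : ChoiceT p) : Dominates (TreeT p) (Phi t) := by
  intro z hz
  rcases z with ⟨⟩ | i' | a | a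
  · -- z = vx
    rcases t with f | ⟨i, f, hf⟩
    · exact absurd (Set.mem_insert _ _) hz
    · exact ⟨vw p i, Set.mem_insert _ _, (adj_vx (vw p i)).2 ⟨i, rfl⟩⟩
  · -- z = vw i'
    rcases t with f | ⟨i, f, hf⟩
    · exact ⟨vx p, Set.mem_insert _ _, (adj_vw (vx p) i').2 (Or.inl rfl)⟩
    · rcases eq_or_ne i' i with rfl | hne
      · exact absurd (Set.mem_insert _ _) hz
      · obtain ⟨l, hl⟩ := hf i' hne
        refine ⟨vv p ⟨i', l⟩, Set.mem_insert_of_mem _ ?_, ?_⟩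
        · exact (vv_mem_range_pick f ⟨i', l⟩).2 hl
        · exact (adj_vw (vv p ⟨i', l⟩) i').2 (Or.inr ⟨l, rfl⟩)
  · -- z = vv a
    rcases pick_mem_Phi t a with h | h
    · exact absurd h hz
    · exact ⟨vu p a, h, (adj_vv (vu p a) a).2 (Or.inr rfl)⟩
  · -- z = vu a
    rcases pick_mem_Phi t a with h | h
    · exact ⟨vv p a, h, (adj_vu (vv p a) a).2 rfl⟩
    · exact absurd h hz

/-! ### Structure of dominating sets -/

attribute [local instance] Classical.propDecidable


lemma dom_structure (D : Set (Vt p)) (hD : Dominates (TreeT p) D) :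
    ∃ e ∈ D, (e = vx p ∨ ∃ i, e = vw p i) ∧
      Set.range (pick (fun i j => decide (vv p ⟨i, j⟩ ∈ D))) ⊆ D := by
  set f : ∀ i, Fin (p i) → Bool := fun i j => decide (vv p ⟨i, j⟩ ∈ D) with hf
  have hrange : Set.range (pick f) ⊆ D := by
    rintro z ⟨a, rfl⟩
    by_cases hv : vv p a ∈ D
    · have : f a.1 a.2 = true := by simp [hf, Sigma.eta, hv]
      simpa [pick, this] using hv
    · have hft : f a.1 a.2 = false := by simp [hf, Sigma.eta, hv]
      have hu : vu p a ∈ D := by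
        by_contra hu
        obtain ⟨nb, hnb, hadj⟩ := hD (vu p a) hu
        rw [adj_vu] at hadj
        exact hv (hadj ▸ hnb)
      simpa [pick, hft] using hu
  by_cases hx : vx p ∈ D
  · exact ⟨vx p, hx, Or.inl rfl, hrange⟩
  · obtain ⟨nb, hnb, hadj⟩ := hD (vx p) hx
    rw [adj_vx] at hadj
    obtain ⟨i, rfl⟩ := hadj
    exact ⟨vw p i, hnb, Or.inr ⟨i, rfl⟩, hrange⟩

lemma domN_eq : domN (TreeT p) = (∑ i, p i) + 1 := by
  have hmem : ((∑ i, p i) + 1) ∈ {n | ∃ D : Set (Vt p), Dominates (TreeT p) D ∧ D.ncard = n} :=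
    ⟨Phi (Sum.inl fun _ _ => true), dominates_Phi _, ncard_Phi _⟩
  refine le_antisymm (Nat.sInf_le hmem) (le_csInf ⟨_, hmem⟩ ?_)
  rintro n ⟨D, hD, rfl⟩
  obtain ⟨e, he, hcase, hrange⟩ := dom_structure D hD
  have hnotmem : e ∉ Set.range (pick (fun i j => decide (vv p ⟨i, j⟩ ∈ D))) := by
    rcases hcase with rfl | ⟨i, rfl⟩
    · exact vx_not_mem_range_pick _
    · exact vw_not_mem_range_pick _ i
  calc (∑ i, p i) + 1 = (insert e (Set.range (pick fun i j => decide (vv p ⟨i, j⟩ ∈ D)))).ncard :=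
        (ncard_insert_range_pick e _ hnotmem).symm
    _ ≤ D.ncard := Set.ncard_le_ncard (Set.insert_subset he hrange) (Set.toFinite D)

lemma minDomSet_iff (D : Set (Vt p)) : MinDomSet (TreeT p) D ↔ ∃ t : ChoiceT p, Phi t = D := by
  constructor
  · rintro ⟨hD, hcard⟩
    rw [domN_eq] at hcard
    obtain ⟨e, he, hcase, hrange⟩ := dom_structure D hD
    set f : ∀ i, Fin (p i) → Bool := fun i j => decide (vv p ⟨i, j⟩ ∈ D) with hf
    have hnotmem : e ∉ Set.range (pick f) := by
      rcases hcase with rfl | ⟨i, rfl⟩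
      · exact vx_not_mem_range_pick _
      · exact vw_not_mem_range_pick _ i
    have hSD : insert e (Set.range (pick f)) = D := by
      refine Set.eq_of_subset_of_ncard_le (Set.insert_subset he hrange) ?_ (Set.toFinite D)
      rw [hcard, ncard_insert_range_pick e f hnotmem]
    rcases hcase with rfl | ⟨i₀, rfl⟩
    · exact ⟨Sum.inl f, hSD⟩
    · have hcon : ∀ j, j ≠ i₀ → ∃ l, f j l = true := by
        intro j hj
        have hwj : vw p j ∉ D := by
          rw [← hSD]
          rintro (h | h)
          · exact hj (vw_inj.1 h)
          · exact vw_not_mem_range_pick f j h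
        obtain ⟨nb, hnb, hadj⟩ := hD (vw p j) hwj
        rw [adj_vw] at hadj
        rcases hadj with rfl | ⟨l, rfl⟩
        · rw [← hSD] at hnb
          rcases hnb with h | h
          · exact absurd h (vx_ne_vw i₀)
          · exact absurd h (vx_not_mem_range_pick f)
        · refine ⟨l, ?_⟩
          rw [← hSD] at hnb
          rcases hnb with h | h
          · exact absurd h (vv_ne_vw _ i₀)
          · exact (vv_mem_range_pick f ⟨j, l⟩).1 h
      exact ⟨Sum.inr ⟨i₀, f, hcon⟩, hSD⟩
  · rintro ⟨t, rfl⟩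
    exact ⟨dominates_Phi t, by rw [ncard_Phi, domN_eq]⟩

lemma Phi_injective : Function.Injective (Phi (p := p)) := by
  have hvv : ∀ (e : Vt p) (f : ∀ i, Fin (p i) → Bool) (a : Σ i : Fin k, Fin (p i)),
      (e = vx p ∨ ∃ i, e = vw p i) →
      (vv p a ∈ insert e (Set.range (pick f)) ↔ f a.1 a.2 = true) := by
    intro e f a hcase
    rw [Set.mem_insert_iff, vv_mem_range_pick]
    rcases hcase with rfl | ⟨i, rfl⟩
    · exact or_iff_right (vv_ne_vx a)
    · exact or_iff_right (vv_ne_vw a i)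
  have feq : ∀ (e₁ e₂ : Vt p) (f₁ f₂ : ∀ i, Fin (p i) → Bool),
      (e₁ = vx p ∨ ∃ i, e₁ = vw p i) → (e₂ = vx p ∨ ∃ i, e₂ = vw p i) →
      insert e₁ (Set.range (pick f₁)) = insert e₂ (Set.range (pick f₂)) → f₁ = f₂ := by
    intro e₁ e₂ f₁ f₂ h1 h2 h
    funext i j
    rw [Bool.eq_iff_iff]
    rw [← hvv e₁ f₁ ⟨i, j⟩ h1, ← hvv e₂ f₂ ⟨i, j⟩ h2, h]
  intro t₁ t₂ h
  rcases t₁ with f₁ | ⟨i₁, f₁, hf₁⟩ <;> rcases t₂ with f₂ | ⟨i₂, f₂, hf₂⟩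
  · have := feq _ _ f₁ f₂ (Or.inl rfl) (Or.inl rfl) h
    subst this; rfl
  · exfalso
    have hx1 : vx p ∈ Phi (Sum.inl f₁) := Set.mem_insert _ _
    rw [h] at hx1
    rcases hx1 with h' | h'
    · exact vx_ne_vw i₂ h'
    · exact vx_not_mem_range_pick f₂ h'
  · exfalso
    have hx1 : vx p ∈ Phi (Sum.inl f₂) := Set.mem_insert _ _
    rw [← h] at hx1
    rcases hx1 with h' | h'
    · exact vx_ne_vw i₁ h'
    · exact vx_not_mem_range_pick f₁ h'
  · have hieq : i₁ = i₂ := by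
      have hw : vw p i₁ ∈ Phi (Sum.inr ⟨i₁, f₁, hf₁⟩) := Set.mem_insert _ _
      rw [h] at hw
      rcases hw with h' | h'
      · exact vw_inj.1 h'
      · exact absurd h' (vw_not_mem_range_pick f₂ i₁)
    subst hieq
    have := feq _ _ f₁ f₂ (Or.inr ⟨i₁, rfl⟩) (Or.inr ⟨i₁, rfl⟩) h
    subst this; rfl


/-! ### Counting -/

noncomputable instance : Fintype (ChoiceT p) :=
  inferInstanceAs (Fintype ((∀ i, Fin (p i) → Bool) ⊕
    (Σ i : Fin k, {f : ∀ i, Fin (p i) → Bool // ∀ j, j ≠ i → ∃ l, f j l = true})))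

lemma card_exists_true (n : ℕ) :
    Fintype.card {g : Fin n → Bool // ∃ l, g l = true} = 2 ^ n - 1 := by
  have h1 : Fintype.card {g : Fin n → Bool // ¬∃ l, g l = true} = 1 := by
    rw [Fintype.card_eq_one_iff]
    refine ⟨⟨fun _ => false, by simp⟩, ?_⟩
    rintro ⟨g, hg⟩
    refine Subtype.ext (funext fun l => ?_)
    simpa using fun h => hg ⟨l, h⟩
  have h2 := Fintype.card_subtype_compl (fun g : Fin n → Bool => ∃ l, g l = true)
  have h3 : Fintype.card (Fin n → Bool) = 2 ^ n := by simp
  rw [h3, h1] at h2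
  have h4 : Fintype.card {g : Fin n → Bool // ∃ l, g l = true} ≤ 2 ^ n := by
    rw [← h3]; exact Fintype.card_subtype_le _
  have h6 : 2 ^ n = 1 + Fintype.card {g : Fin n → Bool // ∃ l, g l = true} :=
    (Nat.sub_eq_iff_eq_add h4).1 h2.symm
  exact Nat.eq_sub_of_add_eq (by rw [h6, Nat.add_comm])

lemma card_choiceT :
    Fintype.card (ChoiceT p) =
      2 ^ (∑ i, p i) +
        ∑ i, 2 ^ (p i) * ∏ j ∈ Finset.univ.erase i, (2 ^ (p j) - 1) := by
  rw [show Fintype.card (ChoiceT p) = Fintype.card (∀ i, Fin (p i) → Bool) +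
      Fintype.card (Σ i : Fin k,
        {f : ∀ i, Fin (p i) → Bool // ∀ j, j ≠ i → ∃ l, f j l = true}) from Fintype.card_sum]
  congr 1
  · rw [Fintype.card_pi]
    simp only [Fintype.card_fun, Fintype.card_bool, Fintype.card_fin]
    exact Finset.prod_pow_eq_pow_sum _ _ _
  · rw [Fintype.card_sigma]
    refine Finset.sum_congr rfl fun i _ => ?_
    rw [Fintype.card_congr
      (Equiv.subtypePiEquivPi (p := fun j (g : Fin (p j) → Bool) => j ≠ i → ∃ l, g l = true))]
    rw [Fintype.card_pi, ← Finset.mul_prod_erase Finset.univ _ (Finset.mem_univ i)]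
    congr 1
    · rw [Fintype.card_congr (Equiv.subtypeUnivEquiv (fun g hne => absurd rfl hne))]
      simp
    · refine Finset.prod_congr rfl fun j hj => ?_
      have hne : j ≠ i := (Finset.mem_erase.1 hj).1
      rw [Fintype.card_congr (Equiv.subtypeEquivRight fun g =>
        ⟨fun h => h hne, fun h _ => h⟩)]
      exact card_exists_true (p j)

lemma setOf_minDomSet : {D : Set (Vt p) | MinDomSet (TreeT p) D} = Set.range (Phi (p := p)) := by
  ext D
  rw [Set.mem_setOf_eq, minDomSet_iff, Set.mem_range]


end TreeTProof

open TreeTProof in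
/-- the number of minimum dominating sets of `T(p 0, …, p (k-1))`
equals `2^(p 0 + ⋯ + p (k-1)) + Σ_i 2^(p i) · Π_{j ≠ i} (2^(p j) - 1)`. -/
theorem TreeT_numMinDomSets (k : ℕ) (hk : 0 < k) (p : Fin k → ℕ)
    (hp : ∀ i, 0 < p i) :
    numMinDomSets (TreeT p) =
      2 ^ (∑ i, p i) +
        ∑ i, 2 ^ (p i) * ∏ j ∈ Finset.univ.erase i, (2 ^ (p j) - 1) := by
  rw [numMinDomSets, setOf_minDomSet, ← Set.image_univ,
    Set.ncard_image_of_injective _ Phi_injective, Set.ncard_univ,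
    Nat.card_eq_fintype_card, card_choiceT]
end

section
/- Let k and p be positive integers and let γ = kp + 1. Then the tree T(p,…,p) (with k groups, each of size p) has domination number γ and has exactly 2^(γ−1) + k · 2^p · (2^p − 1)^(k−1) minimum dominating sets. -/
/-!
Collapse `x` and the `w(i)` to one class and each pendant edge `v(i,j) u(i,j)` to a class of
its own. A dominating set meets all `k p + 1` classes (`x` and `u(i,j)` have all their
neighbours in their own class), so `γ ≥ k p + 1`, with equality for `{x} ∪ {v(i,j)}`. A minimum
dominating set therefore meets every class exactly once: it is given by its vertex among
`x, w(1), …, w(k)` and by a choice of `v(i,j)` or `u(i,j)` for every `(i,j)`. With `x` every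
choice dominates (`2^(kp)` sets); with `w(i₀)` each `w(i)`, `i ≠ i₀`, needs some `v(i,j)`, which
leaves `2^p (2^p - 1)^(k-1)` sets for each of the `k` values of `i₀`.
-/

theorem domN_eq_of_dominates {V : Type*} {G : SimpleGraph V} {D : Set V} {n : ℕ}
    (hD : Dominates G D) (hcard : D.ncard = n)
    (hle : ∀ D' : Set V, Dominates G D' → n ≤ D'.ncard) : domN G = n :=
  le_antisymm (Nat.sInf_le ⟨D, hD, hcard⟩)
    (le_csInf ⟨n, D, hD, hcard⟩ fun _ ⟨D', hD', h⟩ => h ▸ hle D' hD')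

theorem Nat.card_subtype_exists_eq_true (κ : Type*) [Fintype κ] :
    Nat.card {h : κ → Bool // ∃ j, h j = true} = 2 ^ Fintype.card κ - 1 := by
  classical
  have : ∀ h : κ → Bool, (∃ j, h j = true) ↔ h ≠ fun _ => false := by
    simp [funext_iff]
  simp_rw [this, Nat.card_eq_fintype_card, Fintype.card_subtype_compl, Fintype.card_subtype_eq,
    Fintype.card_fun, Fintype.card_bool]

theorem Nat.card_subtype_forall_ne_exists_eq_true {ι κ : Type*} [Fintype ι] [DecidableEq ι]
    [Fintype κ] (i₀ : ι) : Nat.card {f : ι → κ → Bool // ∀ i ≠ i₀, ∃ j, f i j = true} =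
      2 ^ Fintype.card κ * (2 ^ Fintype.card κ - 1) ^ (Fintype.card ι - 1) := by
  rw [Nat.card_congr (Equiv.subtypePiEquivPi (p := fun i (h : κ → Bool) => i ≠ i₀ → ∃ j, h j)),
    Nat.card_pi, ← Finset.mul_prod_erase _ _ (Finset.mem_univ i₀)]
  have hrest : ∀ i ∈ Finset.univ.erase i₀,
      Nat.card {h : κ → Bool // i ≠ i₀ → ∃ j, h j = true} = 2 ^ Fintype.card κ - 1 := by
    intro i hi
    simp [Finset.ne_of_mem_erase hi, Nat.card_subtype_exists_eq_true]
  rw [Finset.prod_congr rfl hrest, Finset.prod_const,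
    Finset.card_erase_of_mem (Finset.mem_univ _), Finset.card_univ]
  simp [Nat.card_fun, Nat.card_eq_fintype_card]

namespace TreeT

variable {k p : ℕ}

abbrev Vertex (k p : ℕ) := Unit ⊕ Fin k ⊕ (Σ _ : Fin k, Fin p) ⊕ (Σ _ : Fin k, Fin p)

abbrev G (k p : ℕ) : SimpleGraph (Vertex k p) := TreeT fun _ : Fin k => p

-- The paper's `x`, `w(i)`, `v(i,j)` and `u(i,j)`.
abbrev root : Vertex k p := .inl ()
abbrev hub (i : Fin k) : Vertex k p := .inr (.inl i)
abbrev stem (i : Fin k) (j : Fin p) : Vertex k p := .inr (.inr (.inl ⟨i, j⟩))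
abbrev leaf (i : Fin k) (j : Fin p) : Vertex k p := .inr (.inr (.inr ⟨i, j⟩))

theorem forall_vertex {P : Vertex k p → Prop} : (∀ z, P z) ↔
    P root ∧ (∀ i, P (hub i)) ∧ (∀ i j, P (stem i j)) ∧ (∀ i j, P (leaf i j)) := by
  simp [Sum.forall, Sigma.forall, Unique.forall_iff]

theorem adj_root_iff {a : Vertex k p} : (G k p).Adj a root ↔ ∃ i, a = hub i := by
  simp only [G, TreeT, SimpleGraph.fromRel_adj]
  aesop

theorem adj_hub_iff {a : Vertex k p} {i : Fin k} :
    (G k p).Adj a (hub i) ↔ a = root ∨ ∃ j, a = stem i j := by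
  simp only [G, TreeT, SimpleGraph.fromRel_adj]
  aesop

theorem adj_stem_iff {a : Vertex k p} {i : Fin k} {j : Fin p} :
    (G k p).Adj a (stem i j) ↔ a = hub i ∨ a = leaf i j := by
  simp only [G, TreeT, SimpleGraph.fromRel_adj]
  aesop

theorem adj_leaf_iff {a : Vertex k p} {i : Fin k} {j : Fin p} :
    (G k p).Adj a (leaf i j) ↔ a = stem i j := by
  simp only [G, TreeT, SimpleGraph.fromRel_adj]
  aesop

theorem dominates_iff {D : Set (Vertex k p)} : Dominates (G k p) D ↔
    (root ∉ D → ∃ i, hub i ∈ D) ∧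
    (∀ i, hub i ∉ D → root ∈ D ∨ ∃ j, stem i j ∈ D) ∧
    (∀ i j, stem i j ∉ D → hub i ∈ D ∨ leaf i j ∈ D) ∧
    (∀ i j, leaf i j ∉ D → stem i j ∈ D) := by
  rw [Dominates, forall_vertex]
  simp only [adj_root_iff, adj_hub_iff, adj_stem_iff, adj_leaf_iff]
  simp [Unique.exists_iff]

def cell : Vertex k p → Option (Fin k × Fin p)
  | .inl _ | .inr (.inl _) => none
  | .inr (.inr (.inl ⟨i, j⟩)) | .inr (.inr (.inr ⟨i, j⟩)) => some (i, j)

theorem image_cell_of_dominates {D : Set (Vertex k p)} (hD : Dominates (G k p) D) :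
    cell '' D = Set.univ := by
  obtain ⟨hroot, -, -, hleaf⟩ := dominates_iff.mp hD
  refine Set.eq_univ_of_forall ?_
  rintro (_ | ⟨i, j⟩)
  · by_cases h : root ∈ D
    · exact ⟨root, h, rfl⟩
    · obtain ⟨i, hi⟩ := hroot h
      exact ⟨hub i, hi, rfl⟩
  · by_cases h : leaf i j ∈ D
    · exact ⟨leaf i j, h, rfl⟩
    · exact ⟨stem i j, hleaf i j h, rfl⟩

theorem ncard_image_cell_of_dominates {D : Set (Vertex k p)} (hD : Dominates (G k p) D) :
    (cell '' D).ncard = k * p + 1 := by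
  simp [image_cell_of_dominates hD, Set.ncard_univ]

theorem le_ncard_of_dominates {D : Set (Vertex k p)} (hD : Dominates (G k p) D) :
    k * p + 1 ≤ D.ncard :=
  ncard_image_cell_of_dominates hD ▸ Set.ncard_image_le

theorem ncard_eq_iff_injOn_cell {D : Set (Vertex k p)} (hD : Dominates (G k p) D) :
    D.ncard = k * p + 1 ↔ Set.InjOn cell D := by
  rw [← ncard_image_cell_of_dominates hD]
  exact ⟨fun h => Set.injOn_of_ncard_image_eq h.symm, fun h => h.ncard_image.symm⟩

def domSet (o : Option (Fin k)) (f : Fin k → Fin p → Bool) : Set (Vertex k p) :=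
  {z | match z with
    | .inl _ => o = none
    | .inr (.inl i) => o = some i
    | .inr (.inr (.inl ⟨i, j⟩)) => f i j = true
    | .inr (.inr (.inr ⟨i, j⟩)) => f i j = false}

def Admissible : Option (Fin k) → (Fin k → Fin p → Bool) → Prop
  | none, _ => True
  | some i₀, f => ∀ i ≠ i₀, ∃ j, f i j = true

abbrev AdmissibleChoice (k p : ℕ) :=
  Σ o : Option (Fin k), {f : Fin k → Fin p → Bool // Admissible o f}

section domSet

variable {o : Option (Fin k)} {f : Fin k → Fin p → Bool}

@[simp] theorem root_mem_domSet : root ∈ domSet o f ↔ o = none := Iff.rfl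
@[simp] theorem hub_mem_domSet {i : Fin k} : hub i ∈ domSet o f ↔ o = some i := Iff.rfl
@[simp] theorem stem_mem_domSet {i : Fin k} {j : Fin p} :
    stem i j ∈ domSet o f ↔ f i j = true := Iff.rfl
@[simp] theorem leaf_mem_domSet {i : Fin k} {j : Fin p} :
    leaf i j ∈ domSet o f ↔ f i j = false := Iff.rfl

theorem domSet_inj {o' : Option (Fin k)} {f' : Fin k → Fin p → Bool} :
    domSet o f = domSet o' f' ↔ o = o' ∧ f = f' := by
  refine ⟨fun h => ⟨?_, ?_⟩, fun ⟨ho, hf⟩ => ho ▸ hf ▸ rfl⟩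
  · cases o with
    | none => exact ((root_mem_domSet (f := f')).mp (h ▸ rfl)).symm
    | some i => exact ((hub_mem_domSet (f := f')).mp (h ▸ rfl)).symm
  · funext i j
    simpa using Set.ext_iff.mp h (stem i j)

theorem dominates_domSet (h : Admissible o f) : Dominates (G k p) (domSet o f) := by
  rw [dominates_iff]
  cases o with
  | none => simp
  | some i₀ =>
    refine ⟨by simp, fun i hi => ?_, by simp +contextual, by simp⟩
    simpa using h i (by simpa [eq_comm] using hi)

theorem injOn_cell_domSet : Set.InjOn cell (domSet o f) := by
  rintro (_ | i | ⟨i, j⟩ | ⟨i, j⟩) h₁ (_ | i' | ⟨i', j'⟩ | ⟨i', j'⟩) h₂ h <;>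
    simp_all [cell, domSet]

theorem exists_domSet_eq {D : Set (Vertex k p)} (hD : Dominates (G k p) D)
    (hinj : Set.InjOn cell D) : ∃ o f, Admissible o f ∧ domSet o f = D := by
  classical
  obtain ⟨hroot, hhub, -, hleaf⟩ := dominates_iff.mp hD
  have htop : ∃ o : Option (Fin k), (root ∈ D ↔ o = none) ∧ ∀ i, hub i ∈ D ↔ o = some i := by
    by_cases hr : root ∈ D
    · exact ⟨none, by simpa, fun i => iff_of_false (fun hi => nomatch hinj hr hi rfl) (by simp)⟩
    · obtain ⟨i₀, hi₀⟩ := hroot hr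
      refine ⟨some i₀, by simpa, fun i => ⟨fun hi => ?_, by rintro ⟨⟩; exact hi₀⟩⟩
      simpa [eq_comm] using hinj hi hi₀ rfl
  obtain ⟨o, hro, hho⟩ := htop
  have hstem_leaf : ∀ i j, leaf i j ∈ D ↔ stem i j ∉ D := fun i j =>
    ⟨fun hl hs => (nomatch hinj hs hl rfl), fun hs => by simpa using mt (hleaf i j) hs⟩
  refine ⟨o, fun i j => decide (stem i j ∈ D), ?_, ?_⟩
  · cases o with
    | none => trivial
    | some i₀ =>
      intro i hi
      rcases hhub i (by simpa [hho] using hi.symm) with hr | ⟨j, hj⟩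
      · simp [hro] at hr
      · exact ⟨j, by simpa⟩
  · ext z
    revert z
    refine forall_vertex.mpr ⟨by simp [hro], fun i => by simp [hho], fun i j => by simp,
      fun i j => by simp [hstem_leaf]⟩

theorem ncard_domSet (h : Admissible o f) : (domSet o f).ncard = k * p + 1 :=
  (ncard_eq_iff_injOn_cell (dominates_domSet h)).mpr injOn_cell_domSet

end domSet

theorem domN_eq : domN (G k p) = k * p + 1 :=
  domN_eq_of_dominates (dominates_domSet (o := none) (f := fun _ _ => true) trivial)
    (ncard_domSet trivial) fun _ => le_ncard_of_dominates

theorem minDomSet_iff {D : Set (Vertex k p)} :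
    MinDomSet (G k p) D ↔ ∃ o f, Admissible o f ∧ domSet o f = D := by
  constructor
  · rintro ⟨hD, hcard⟩
    exact exists_domSet_eq hD ((ncard_eq_iff_injOn_cell hD).mp (hcard.trans domN_eq))
  · rintro ⟨o, f, h, rfl⟩
    exact ⟨dominates_domSet h, (ncard_domSet h).trans domN_eq.symm⟩

theorem setOf_minDomSet_eq_range : {D | MinDomSet (G k p) D} =
    Set.range fun q : AdmissibleChoice k p => domSet q.1 q.2.1 := by
  ext D
  simp [minDomSet_iff]

theorem injective_domSet_sigma :
    Function.Injective fun q : AdmissibleChoice k p => domSet q.1 q.2.1 := by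
  rintro ⟨o, f, hf⟩ ⟨o', f', hf'⟩ h
  obtain ⟨rfl, rfl⟩ := domSet_inj.mp h
  rfl

theorem numMinDomSets_eq :
    numMinDomSets (G k p) = 2 ^ (k * p) + k * 2 ^ p * (2 ^ p - 1) ^ (k - 1) := by
  rw [numMinDomSets, setOf_minDomSet_eq_range,
    Set.ncard_range_of_injective injective_domSet_sigma, Nat.card_sigma, Fintype.sum_option]
  have hnone : Nat.card {f : Fin k → Fin p → Bool // Admissible none f} = 2 ^ (k * p) := by
    simp [Admissible, ← pow_mul, mul_comm]
  have hsome (i : Fin k) :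
      Nat.card {f : Fin k → Fin p → Bool // Admissible (some i) f} =
        2 ^ p * (2 ^ p - 1) ^ (k - 1) := by
    have := Nat.card_subtype_forall_ne_exists_eq_true (κ := Fin p) i
    rwa [Fintype.card_fin, Fintype.card_fin] at this
  simp [hnone, hsome, mul_assoc]

end TreeT

theorem TreeT_const_domN_numMinDomSets_general (k p γ : ℕ)
    (hγ : γ = k * p + 1) :
    domN (TreeT (fun _ : Fin k => p)) = γ ∧
      numMinDomSets (TreeT (fun _ : Fin k => p)) =
        2 ^ (γ - 1) + k * 2 ^ p * (2 ^ p - 1) ^ (k - 1) := by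
  subst hγ
  exact ⟨TreeT.domN_eq, TreeT.numMinDomSets_eq⟩

/-- for positive integers `k` and `p` and `γ = k·p + 1`, the tree
`T(p, …, p)` (with `k` groups of size `p`) has domination number `γ` and exactly
`2^(γ-1) + k · 2^p · (2^p - 1)^(k-1)` minimum dominating sets. -/
theorem TreeT_const_domN_numMinDomSets (k p γ : ℕ) (hk : 0 < k) (hp : 0 < p)
    (hγ : γ = k * p + 1) :
    domN (TreeT (fun _ : Fin k => p)) = γ ∧
      numMinDomSets (TreeT (fun _ : Fin k => p)) =
        2 ^ (γ - 1) + k * 2 ^ p * (2 ^ p - 1) ^ (k - 1) :=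
  TreeT_const_domN_numMinDomSets_general k p γ hγ
end

section
/- Let F be a forest with domination number γ and exactly s strong support vertices such that every connected component of F has domination number 1. Then F has at most 2^(γ−s) minimum dominating sets. -/
open SimpleGraph Set Function

lemma domN_le' {V : Type*} (G : SimpleGraph V) {D : Set V} (hD : Dominates G D) :
    domN G ≤ D.ncard := Nat.sInf_le ⟨D, hD, rfl⟩

lemma exists_minDomSet' {V : Type*} (G : SimpleGraph V) : ∃ D : Set V, MinDomSet G D := by
  have hne : {n | ∃ D : Set V, Dominates G D ∧ D.ncard = n}.Nonempty :=
    ⟨_, Set.univ, fun v hv => absurd (Set.mem_univ v) hv, rfl⟩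
  obtain ⟨D, hD, hcard⟩ := Nat.sInf_mem hne
  exact ⟨D, hD, hcard⟩

lemma no_triangle' {V : Type*} {F : SimpleGraph V} (hF : F.IsAcyclic) {a b c : V}
    (hab : F.Adj a b) (hbc : F.Adj b c) (hac : F.Adj a c) : False := by
  have hp : (SimpleGraph.Walk.cons hab (SimpleGraph.Walk.cons hbc SimpleGraph.Walk.nil)).IsPath := by
    simp [SimpleGraph.Walk.isPath_def, hab.ne, hbc.ne, hac.ne]
  have := hF.path_unique (SimpleGraph.Path.singleton hac) ⟨_, hp⟩
  have hlen := congrArg (fun p : F.Path a c => p.1.length) this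
  simp [SimpleGraph.Path.singleton] at hlen

/-- a forest with domination number `γ` and exactly `s` strong
support vertices, all of whose connected components have domination number `1`,
has at most `2^(γ-s)` minimum dominating sets. -/
theorem forest_components_domN_one {V : Type*} [Fintype V] (F : SimpleGraph V)
    (γ s : ℕ) (hF : F.IsAcyclic) (hγ : domN F = γ)
    (hs : {v : V | IsStrongSupportVtx F v}.ncard = s)
    (hcomp : ∀ c : F.ConnectedComponent, domN (F.induce c.supp) = 1) :
    numMinDomSets F ≤ 2 ^ (γ - s) := by
  classical
  letI : Fintype F.ConnectedComponent := Fintype.ofFinite _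
  have adj_mk : ∀ {u v : V}, F.Adj u v →
      F.connectedComponentMk u = F.connectedComponentMk v :=
    fun h => ConnectedComponent.sound h.reachable
  have key : ∀ c : F.ConnectedComponent,
      ∃ x, x ∈ c.supp ∧ ∀ y ∈ c.supp, y ≠ x → F.Adj x y := by
    intro c
    obtain ⟨D, hD, hc⟩ := exists_minDomSet' (F.induce c.supp)
    rw [hcomp c] at hc
    obtain ⟨x, rfl⟩ := Set.ncard_eq_one.mp hc
    refine ⟨x, x.2, fun y hy hne => ?_⟩
    obtain ⟨u, hu, hadj⟩ := hD ⟨y, hy⟩ (by simp [Subtype.ext_iff, hne])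
    rw [Set.mem_singleton_iff] at hu
    subst hu
    exact hadj
  choose x hxsupp hxdom using key
  -- domN F = card of components
  have hdomrange : Dominates F (Set.range x) := by
    intro v hv
    refine ⟨x (F.connectedComponentMk v), ⟨_, rfl⟩, ?_⟩
    have hne : v ≠ x (F.connectedComponentMk v) := fun h => hv (h ▸ mem_range_self _)
    exact hxdom _ v rfl hne
  have hN : domN F = Fintype.card F.ConnectedComponent := by
    apply le_antisymm
    · calc domN F ≤ (Set.range x).ncard := domN_le' F hdomrange
        _ = (x '' Set.univ).ncard := by rw [image_univ]
        _ ≤ (Set.univ : Set F.ConnectedComponent).ncard := Set.ncard_image_le (toFinite _)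
        _ = Fintype.card F.ConnectedComponent := by
            rw [Set.ncard_univ, Nat.card_eq_fintype_card]
    · obtain ⟨D, hD, hcard⟩ := exists_minDomSet' F
      rw [← hcard]
      have hsel : ∀ c : F.ConnectedComponent, ∃ v, v ∈ D ∧ v ∈ c.supp := by
        intro c
        obtain ⟨w, hw⟩ := c.exists_rep
        by_cases hwD : w ∈ D
        · exact ⟨w, hwD, hw⟩
        · obtain ⟨u, hu, hadj⟩ := hD w hwD
          exact ⟨u, hu, by rw [ConnectedComponent.mem_supp_iff, adj_mk hadj]; exact hw⟩
      choose g hg1 hg2 using hsel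
      have hginj : Function.Injective g := by
        intro a b hab
        have h1 := hg2 a
        have h2 := hg2 b
        rw [ConnectedComponent.mem_supp_iff] at h1 h2
        rw [← h1, hab, h2]
      calc Fintype.card F.ConnectedComponent
          = Nat.card F.ConnectedComponent := (Nat.card_eq_fintype_card).symm
        _ = Nat.card (Set.range g) := (Nat.card_range_of_injective hginj).symm
        _ = (Set.range g).ncard := Nat.card_coe_set_eq _
        _ ≤ D.ncard := Set.ncard_le_ncard (range_subset_iff.mpr hg1) D.toFinite
  set M : F.ConnectedComponent → Set V :=
    fun c => {v | v ∈ c.supp ∧ ∀ y ∈ c.supp, y ≠ v → F.Adj v y} with hM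
  have struct : ∀ D : Set V, MinDomSet F D →
      ∀ c : F.ConnectedComponent, ∃ v, D ∩ c.supp = {v} ∧ v ∈ M c := by
    rintro D ⟨hDdom, hDcard⟩ c
    rw [hN] at hDcard
    have hsel : ∀ c : F.ConnectedComponent, ∃ v, v ∈ D ∧ v ∈ c.supp := by
      intro c
      obtain ⟨w, hw⟩ := c.exists_rep
      by_cases hwD : w ∈ D
      · exact ⟨w, hwD, hw⟩
      · obtain ⟨u, hu, hadj⟩ := hDdom w hwD
        exact ⟨u, hu, by rw [ConnectedComponent.mem_supp_iff, adj_mk hadj]; exact hw⟩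
    choose g hg1 hg2 using hsel
    have hginj : Function.Injective g := by
      intro a b hab
      have h1 := hg2 a
      have h2 := hg2 b
      rw [ConnectedComponent.mem_supp_iff] at h1 h2
      rw [← h1, hab, h2]
    have hrange : Set.range g = D := by
      refine Set.eq_of_subset_of_ncard_le (range_subset_iff.mpr hg1) ?_ D.toFinite
      calc D.ncard = Fintype.card F.ConnectedComponent := hDcard
        _ = Nat.card F.ConnectedComponent := (Nat.card_eq_fintype_card).symm
        _ = Nat.card (Set.range g) := (Nat.card_range_of_injective hginj).symm
        _ = (Set.range g).ncard := Nat.card_coe_set_eq _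
        _ ≤ (Set.range g).ncard := le_rfl
    have hint : D ∩ c.supp = {g c} := by
      apply Set.eq_singleton_iff_unique_mem.mpr
      refine ⟨⟨hg1 c, hg2 c⟩, ?_⟩
      rintro w ⟨hwD, hwc⟩
      rw [← hrange] at hwD
      obtain ⟨c', rfl⟩ := hwD
      have h1 := hg2 c'
      rw [ConnectedComponent.mem_supp_iff] at h1 hwc
      rw [← hwc, h1]
    refine ⟨g c, hint, hg2 c, fun y hy hne => ?_⟩
    have hyD : y ∉ D := by
      intro hyD
      have : y ∈ D ∩ c.supp := ⟨hyD, hy⟩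
      rw [hint] at this
      exact hne this
    obtain ⟨u, hu, hadj⟩ := hDdom y hyD
    have husupp : u ∈ c.supp := by
      rw [ConnectedComponent.mem_supp_iff, adj_mk hadj]
      exact (ConnectedComponent.mem_supp_iff _ _).mp hy
    have : u ∈ D ∩ c.supp := ⟨hu, husupp⟩
    rw [hint] at this
    rw [← this]
    exact hadj
  have endvtx_unique : ∀ {p q z : V}, F.Adj p z → F.Adj q z → p ≠ q → ¬IsEndvtx F z := by
    intro p q z hp hq hpq he
    have hsub : ({p, q} : Set V) ⊆ F.neighborSet z := by
      rintro w (rfl | rfl)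
      · exact hp.symm
      · exact hq.symm
    have hle := Set.ncard_le_ncard hsub (toFinite _)
    rw [Set.ncard_pair hpq] at hle
    unfold IsEndvtx at he
    omega
  have strong_eq : ∀ v, IsStrongSupportVtx F v → v = x (F.connectedComponentMk v) := by
    rintro v ⟨a, b, hab, hva, hvb, hea, heb⟩
    by_contra hne
    have hva' : a ∈ (F.connectedComponentMk v).supp := by
      rw [ConnectedComponent.mem_supp_iff]
      exact (adj_mk hva).symm
    have hvb' : b ∈ (F.connectedComponentMk v).supp := by
      rw [ConnectedComponent.mem_supp_iff]
      exact (adj_mk hvb).symm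
    have ha : a = x (F.connectedComponentMk v) := by
      by_contra h
      exact endvtx_unique hva (hxdom _ a hva' h) hne hea
    have hb : b = x (F.connectedComponentMk v) := by
      by_contra h
      exact endvtx_unique hvb (hxdom _ b hvb' h) hne heb
    exact hab (ha.trans hb.symm)
  have hM2 : ∀ c, (M c).ncard ≤ 2 := by
    intro c
    by_contra h
    push_neg at h
    obtain ⟨u, hu, v, hv, w, hw, huv, huw, hvw⟩ := (Set.two_lt_ncard (toFinite _)).mp h
    exact no_triangle' hF (hu.2 v hv.1 (Ne.symm huv)) (hv.2 w hw.1 (Ne.symm hvw))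
      (hu.2 w hw.1 (Ne.symm huw))
  have hM1 : ∀ c : F.ConnectedComponent,
      (∃ v ∈ c.supp, IsStrongSupportVtx F v) → (M c).ncard ≤ 1 := by
    rintro c ⟨v, hvc, hstr⟩
    obtain ⟨a, b, hab, hva, hvb, hea, heb⟩ := hstr
    have hcv : F.connectedComponentMk v = c := (ConnectedComponent.mem_supp_iff _ _).mp hvc
    have ha : a ∈ c.supp := by
      rw [ConnectedComponent.mem_supp_iff, ← hcv]
      exact (adj_mk hva).symm
    have hb : b ∈ c.supp := by
      rw [ConnectedComponent.mem_supp_iff, ← hcv]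
      exact (adj_mk hvb).symm
    have hvane : v ≠ a := hva.ne
    have hvbne : v ≠ b := hvb.ne
    rw [Set.ncard_le_one (toFinite _)]
    intro u hu w hw
    by_contra hune
    obtain ⟨z, hz, hzu, hzw⟩ : ∃ z ∈ c.supp, z ≠ u ∧ z ≠ w := by
      by_cases h1 : v ≠ u ∧ v ≠ w
      · exact ⟨v, hvc, h1⟩
      by_cases h2 : a ≠ u ∧ a ≠ w
      · exact ⟨a, ha, h2⟩
      rw [not_and_or, not_not, not_not] at h1 h2
      refine ⟨b, hb, ?_, ?_⟩ <;>
        (rcases h1 with rfl | rfl <;> rcases h2 with rfl | rfl <;> tauto)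
    exact no_triangle' hF (hu.2 w hw.1 (Ne.symm hune)) (hw.2 z hz hzw)
      (hu.2 z hz hzu)
  -- counting
  set P : F.ConnectedComponent → Prop := fun c => ∃ v ∈ c.supp, IsStrongSupportVtx F v with hP
  have hstr := fun (D : {D : Set V // MinDomSet F D}) (c : F.ConnectedComponent) =>
    struct D.1 D.2 c
  choose f hf1 hf2 using hstr
  have hmem : ∀ (D : {D : Set V // MinDomSet F D}) (v : V),
      v ∈ D.1 ↔ v = f D (F.connectedComponentMk v) := by
    intro D v
    constructor
    · intro hv
      have h : v ∈ D.1 ∩ (F.connectedComponentMk v).supp := ⟨hv, rfl⟩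
      rw [hf1 D (F.connectedComponentMk v)] at h
      exact h
    · intro hv
      rw [hv]
      have h : f D (F.connectedComponentMk v) ∈ D.1 ∩ (F.connectedComponentMk v).supp := by
        rw [hf1 D (F.connectedComponentMk v)]
        rfl
      exact h.1
  set Φ : {D : Set V // MinDomSet F D} → (∀ c : F.ConnectedComponent, (M c : Set V)) :=
    fun D c => ⟨f D c, hf2 D c⟩ with hΦdef
  have hΦinj : Function.Injective Φ := by
    intro D D' h
    have hfeq : ∀ c, f D c = f D' c := by
      intro c
      have := congrFun h c
      exact Subtype.ext_iff.mp this
    apply Subtype.ext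
    ext v
    rw [hmem D v, hmem D' v, hfeq]
  have hsle : s ≤ (Finset.univ.filter (fun c => P c)).card := by
    rw [← hs, ← Set.ncard_coe_finset]
    apply Set.ncard_le_ncard_of_injOn (fun v => F.connectedComponentMk v)
    · intro v hv
      simp only [Finset.coe_filter, Set.mem_setOf_eq]
      exact ⟨Finset.mem_univ _, v, rfl, hv⟩
    · intro v hv w hw hvw
      rw [strong_eq v hv, strong_eq w hw]
      exact congrArg x hvw
  have hγN : γ = Fintype.card F.ConnectedComponent := by rw [← hγ, hN]
  calc numMinDomSets F = Nat.card {D : Set V // MinDomSet F D} := by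
        rw [numMinDomSets, ← Nat.card_coe_set_eq]
        rfl
    _ ≤ Nat.card (∀ c : F.ConnectedComponent, (M c : Set V)) :=
        Nat.card_le_card_of_injective Φ hΦinj
    _ = ∏ c : F.ConnectedComponent, Nat.card (M c : Set V) := Nat.card_pi
    _ = ∏ c : F.ConnectedComponent, (M c).ncard := by
        refine Finset.prod_congr rfl fun c _ => Nat.card_coe_set_eq _
    _ ≤ ∏ c : F.ConnectedComponent, (if P c then 1 else 2) := by
        refine Finset.prod_le_prod' fun c _ => ?_
        by_cases h : P c
        · simpa [h] using hM1 c h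
        · simpa [h] using hM2 c
    _ = 2 ^ (Finset.univ.filter (fun c => ¬ P c)).card := by
        rw [Finset.prod_ite, Finset.prod_const, Finset.prod_const]
        simp
    _ ≤ 2 ^ (γ - s) := by
        apply Nat.pow_le_pow_right (by norm_num)
        have h1 := Finset.card_filter_add_card_filter_not
          (s := (Finset.univ : Finset F.ConnectedComponent)) (p := fun c => P c)
        rw [Finset.card_univ, ← hγN] at h1
        omega
end
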